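/- Every CA-AG-3-band is a commutative semigroup; that is, if a magma S satisfies the left invertive law, cyclic associativity, and (a·a)·a = a and a·(a·a) = a for all a, then S is commutative (a·b = b·a for all a,b) and associative ((a·b)·c = a·(b·c) for all a,b,c). -/

import Mathlib

section Magma

variable {S : Type*} [Mul S]

theorem mul_comm_of_leftInvertive_of_cyclicAssoc
    (li : ∀ a b c : S, (a * b) * c = (c * b) * a)
    (ca : ∀ a b c : S, a * (b * c) = c * (a * b))
    (cube : ∀ a : S, (a * a) * a = a) (a b : S) :
    a * b = b * a := by
  have hab : a * b = (b * a) * (a * a) :=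
    calc a * b = ((a * a) * a) * b := by rw [cube]
      _ = (b * a) * (a * a) := li _ _ _
  have hba : b * a = (b * a) * (a * a) :=
    calc b * a = b * ((a * a) * a) := by rw [cube]
      _ = a * (a * (b * a)) := by rw [ca b, ca b]
      _ = (b * a) * (a * a) := ca _ _ _
  rw [hab, ← hba]

theorem mul_assoc_of_leftInvertive_of_comm
    (li : ∀ a b c : S, (a * b) * c = (c * b) * a)
    (comm : ∀ a b : S, a * b = b * a) (a b c : S) :
    (a * b) * c = a * (b * c) := by
  rw [li, comm, comm c b]

end Magma

theorem CA_AG_3_band_is_commutative_semigroup_general {S : Type*} [Mul S]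
    (li : ∀ a b c : S, (a * b) * c = (c * b) * a)
    (ca : ∀ a b c : S, a * (b * c) = c * (a * b))
    (band3l : ∀ a : S, (a * a) * a = a) :
    (∀ a b : S, a * b = b * a) ∧
    (∀ a b c : S, (a * b) * c = a * (b * c)) :=
  have comm := mul_comm_of_leftInvertive_of_cyclicAssoc li ca band3l
  ⟨comm, mul_assoc_of_leftInvertive_of_comm li comm⟩

theorem CA_AG_3_band_is_commutative_semigroup {S : Type*} [Mul S]
    (li : ∀ a b c : S, (a * b) * c = (c * b) * a)
    (ca : ∀ a b c : S, a * (b * c) = c * (a * b))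
    (band3l : ∀ a : S, (a * a) * a = a)
    (band3r : ∀ a : S, a * (a * a) = a) :
    (∀ a b : S, a * b = b * a) ∧
    (∀ a b c : S, (a * b) * c = a * (b * c)) :=
  CA_AG_3_band_is_commutative_semigroup_general li ca band3l
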